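/- arXiv:2407.10912 — 5 statements merged into one kernel-verified Lean document; each statement's English description precedes it below -/
import Mathlib

section
/- Let u ∈ K minimize the Signorini energy I(v) = ½‖∇v‖²_Ω − (f,v)_Ω − ⟨g,v⟩_{Γ_N} over K = {v ∈ H¹(Ω) : v = u_D a.e. on Γ_D, v ≥ χ a.e. on Γ_C}, and let z ∈ K* maximize D(y) = −½‖y‖²_Ω + ⟨y·n, χ⟩_{∂Ω} − ⟨g, χ⟩_{Γ_N} over K* (divergence-free constraint div y = −f, Neumann constraint, and nonnegativity of y·n on Γ_C). Assume the strong duality I(u) = D(z) and convex optimality relations z = ∇u a.e. in Ω and ⟨z·n, u − χ⟩_{∂Ω} = ⟨g, u − χ⟩_{Γ_N}. Then for every v ∈ K and y ∈ K*: ½‖∇v − ∇u‖²_Ω + ⟨z·n, v−χ⟩_{∂Ω} − ⟨g, v−χ⟩_{Γ_N} + ½‖y − z‖²_Ω + ⟨y·n, u−χ⟩_{∂Ω} − ⟨g, u−χ⟩_{Γ_N} = ½‖∇v − y‖²_Ω + ⟨y·n, v−χ⟩_{∂Ω} − ⟨g, v−χ⟩_{Γ_N}. -/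
open scoped RealInnerProductSpace

/-- A posteriori error identity for the scalar Signorini problem, in abstract form.
`V` plays the role of `H¹(Ω)`, `W` of `(L²(Ω))^d`, `G` is the gradient, `Y` the space
`H(div;Ω)` with realization `ι : Y → W`, `pair y w = ⟨y·n, w⟩_{∂Ω}`, `fL w = (f,w)_Ω`,
`gN w = ⟨g, w⟩_{Γ_N}`. Under strong duality `I(u) = D(z)`, the optimality relations
`z = ∇u` and `⟨z·n, u−χ⟩ = ⟨g, u−χ⟩`, and integration by parts for differences of
admissible fields tested with differences of admissible functions, the error identity
(1.1) of the paper holds. -/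
theorem stmt5 {V W Y : Type*} [NormedAddCommGroup V] [InnerProductSpace ℝ V]
    [NormedAddCommGroup W] [InnerProductSpace ℝ W]
    (G : V →L[ℝ] W) (ι : Y → W) (pair : Y → V →ₗ[ℝ] ℝ) (fL gN : V →ₗ[ℝ] ℝ)
    (K : Set V) (Kstar : Set Y) (χ u : V) (z : Y)
    (hu : u ∈ K) (hz : z ∈ Kstar)
    (hdual : (1 / 2) * ‖G u‖ ^ 2 - fL u - gN u
      = -(1 / 2) * ‖ι z‖ ^ 2 + pair z χ - gN χ)
    (hopt1 : ι z = G u)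
    (hopt2 : pair z (u - χ) = gN (u - χ))
    (hibp : ∀ y ∈ Kstar, ∀ y' ∈ Kstar, ∀ v ∈ K, ∀ v' ∈ K,
      ⟪ι y - ι y', G (v - v')⟫ = pair y (v - v') - pair y' (v - v')) :
    ∀ v ∈ K, ∀ y ∈ Kstar,
      (1 / 2) * ‖G v - G u‖ ^ 2 + (pair z (v - χ) - gN (v - χ)) +
        ((1 / 2) * ‖ι y - ι z‖ ^ 2 + (pair y (u - χ) - gN (u - χ))) =
      (1 / 2) * ‖G v - ι y‖ ^ 2 + (pair y (v - χ) - gN (v - χ)) := by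
  intro v hv y hy
  have hibp' := hibp y hy z hz v hv u hu
  rw [map_sub] at hibp'
  have hsplit : v - χ = (v - u) + (u - χ) := by abel
  have p1 : pair y (v - χ) = pair y (v - u) + pair y (u - χ) := by rw [hsplit, map_add]
  have p2 : pair z (v - χ) = pair z (v - u) + pair z (u - χ) := by rw [hsplit, map_add]
  have p3 : gN (v - χ) = gN (v - u) + gN (u - χ) := by rw [hsplit, map_add]
  have h2 : ‖G v - ι y‖ ^ 2
      = ‖G v - G u‖ ^ 2 + ‖ι y - ι z‖ ^ 2 - 2 * ⟪ι y - ι z, G v - G u⟫ := by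
    have he : G v - ι y = (G v - G u) - (ι y - ι z) := by rw [hopt1]; abel
    rw [he, norm_sub_sq_real, real_inner_comm]; ring
  rw [h2] at *
  linarith [hibp', hopt2, p1, p2, p3]
end

section
/- Under the admissibility conditions div y = −f a.e. in Ω, ⟨y·n − g, v⟩ = 0 for Neumann-admissible test functions, and integration by parts, for every v ∈ K and y ∈ K* the primal-dual gap decomposes as I(v) − D(y) = ½‖∇v − y‖²_Ω + ⟨y·n, v − χ⟩_{∂Ω} − ⟨g, v − χ⟩_{Γ_N}. -/
open scoped RealInnerProductSpace

/-- Decomposition of the primal-dual gap for the scalar Signorini problem (abstract form):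
`I(v) − D(y) = ½‖∇v − y‖² + ⟨y·n, v−χ⟩_{∂Ω} − ⟨g, v−χ⟩_{Γ_N}`, where the admissibility
`div y = −f` and integration by parts are encoded by the hypothesis
`⟪ι y, G v⟫ − (f,v) = ⟨y·n, v⟩` for all `y ∈ K*` and all `v`. -/
theorem stmt6 {V W Y : Type*} [NormedAddCommGroup V] [InnerProductSpace ℝ V]
    [NormedAddCommGroup W] [InnerProductSpace ℝ W]
    (G : V →L[ℝ] W) (ι : Y → W) (pair : Y → V →ₗ[ℝ] ℝ) (fL gN : V →ₗ[ℝ] ℝ)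
    (K : Set V) (Kstar : Set Y) (χ : V)
    (hibp : ∀ y ∈ Kstar, ∀ v : V, ⟪ι y, G v⟫ - fL v = pair y v) :
    ∀ v ∈ K, ∀ y ∈ Kstar,
      ((1 / 2) * ‖G v‖ ^ 2 - fL v - gN v) -
        (-(1 / 2) * ‖ι y‖ ^ 2 + pair y χ - gN χ) =
      (1 / 2) * ‖G v - ι y‖ ^ 2 + (pair y (v - χ) - gN (v - χ)) := by
  intro v hv y hy
  have h1 := hibp y hy v
  have h2 : ‖G v - ι y‖ ^ 2 = ‖G v‖ ^ 2 - 2 * ⟪ι y, G v⟫ + ‖ι y‖ ^ 2 := by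
    rw [@norm_sub_sq_real, real_inner_comm]
  rw [map_sub (pair y), map_sub gN, h2]
  linarith
end

section
/- Let u ∈ K be the primal Signorini solution and z ∈ K* the dual solution with z = ∇u a.e. in Ω, div z = −f a.e. in Ω, and ⟨z·n, u − χ⟩_{∂Ω} = ⟨g, u − χ⟩_{Γ_N}. Then for every v ∈ K, ⟨z·n, v − χ⟩_{∂Ω} − ⟨g, v − χ⟩_{Γ_N} ≥ 0. -/
open scoped RealInnerProductSpace

/-- Nonnegativity of the boundary term of the primal strong convexity measure:
if `u ∈ K` is the primal Signorini solution with dual solution `z` satisfying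
`z = ∇u`, `div z = −f` (encoded via integration by parts) and the complementarity
`⟨z·n, u−χ⟩ = ⟨g, u−χ⟩`, and `u` satisfies the primal variational inequality, then
for all `v ∈ K`, `⟨z·n, v−χ⟩ − ⟨g, v−χ⟩ ≥ 0`. -/
theorem stmt7 {V W Y : Type*} [NormedAddCommGroup V] [InnerProductSpace ℝ V]
    [NormedAddCommGroup W] [InnerProductSpace ℝ W]
    (G : V →L[ℝ] W) (ι : Y → W) (pair : Y → V →ₗ[ℝ] ℝ) (fL gN : V →ₗ[ℝ] ℝ)
    (K : Set V) (χ u : V) (z : Y) (hu : u ∈ K)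
    (hopt1 : ι z = G u)
    (hibpz : ∀ v ∈ K, ∀ v' ∈ K,
      pair z (v - v') = ⟪ι z, G (v - v')⟫ - fL (v - v'))
    (hopt2 : pair z (u - χ) = gN (u - χ))
    (hVI : ∀ v ∈ K, ⟪G u, G u - G v⟫ ≤ fL (u - v) + gN (u - v)) :
    ∀ v ∈ K, 0 ≤ pair z (v - χ) - gN (v - χ) := by
  intro v hv
  have hsplit : pair z (v - χ) = pair z (v - u) + pair z (u - χ) := by
    rw [← map_add]; congr 1; abel
  have hgN : gN (v - χ) = gN (v - u) + gN (u - χ) := by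
    rw [← map_add]; congr 1; abel
  have hpv : pair z (v - u) = ⟪G u, G (v - u)⟫ - fL (v - u) := by
    rw [hibpz v hv u hu, hopt1]
  have hvi := hVI v hv
  have hinner : ⟪G u, G (v - u)⟫ = -⟪G u, G u - G v⟫ := by
    rw [map_sub]
    simp [inner_sub_right]
  have hfl : fL (v - u) = -(fL (u - v)) := by rw [← map_neg]; congr 1; abel
  have hgn : gN (v - u) = -(gN (u - v)) := by rw [← map_neg]; congr 1; abel
  rw [hsplit, hgN, hopt2, hpv, hinner, hfl, hgn]
  linarith
end

section
/- Let z ∈ K* be the dual Signorini solution satisfying the dual variational inequality (z, z − y)_Ω ≤ ⟨z·n − y·n, χ⟩_{∂Ω} for all y ∈ K*, and suppose z = ∇u a.e. in Ω and div y = div z = −f a.e. in Ω for y ∈ K*. Then for every y ∈ K*, ⟨y·n, u − χ⟩_{∂Ω} − ⟨g, u − χ⟩_{Γ_N} ≥ 0. -/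
open scoped RealInnerProductSpace

/-- Nonnegativity of the boundary term of the dual strong convexity measure:
if `z ∈ K*` satisfies the dual variational inequality `⟪z, z−y⟫ ≤ ⟨(z−y)·n, χ⟩`,
the optimality relations `z = ∇u` and `⟨z·n, u−χ⟩ = ⟨g, u−χ⟩`, and all members of
`K*` have the same divergence (encoded via integration by parts for differences),
then for every `y ∈ K*`, `⟨y·n, u−χ⟩ − ⟨g, u−χ⟩ ≥ 0`. -/
theorem stmt8 {V W Y : Type*} [NormedAddCommGroup V] [InnerProductSpace ℝ V]
    [NormedAddCommGroup W] [InnerProductSpace ℝ W]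
    (G : V →L[ℝ] W) (ι : Y → W) (pair : Y → V →ₗ[ℝ] ℝ) (gN : V →ₗ[ℝ] ℝ)
    (Kstar : Set Y) (χ u : V) (z : Y) (hz : z ∈ Kstar)
    (hopt1 : ι z = G u)
    (hdVI : ∀ y ∈ Kstar, ⟪ι z, ι z - ι y⟫ ≤ pair z χ - pair y χ)
    (hibp : ∀ y ∈ Kstar, ∀ y' ∈ Kstar, ∀ w : V,
      ⟪ι y - ι y', G w⟫ = pair y w - pair y' w)
    (hopt2 : pair z (u - χ) = gN (u - χ)) :
    ∀ y ∈ Kstar, 0 ≤ pair y (u - χ) - gN (u - χ) := by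
  intro y hy
  have h1 : ⟪ι y - ι z, G u⟫ = pair y u - pair z u := hibp y hy z hz u
  rw [← hopt1] at h1
  have h2 := hdVI y hy
  have e1 : pair y (u - χ) = pair y u - pair y χ := map_sub _ _ _
  have e2 : pair z (u - χ) = pair z u - pair z χ := map_sub _ _ _
  have key : ⟪ι y - ι z, ι z⟫ + ⟪ι z, ι z - ι y⟫ = 0 := by
    rw [inner_sub_left, inner_sub_right, real_inner_comm (ι y) (ι z)]
    ring
  nlinarith [h1, h2, hopt2, e1, e2, key]
end

section
/- Let V be a finite-dimensional real inner product space, S : V → V symmetric positive definite (as a linear map), p : W → V linear from another finite-dimensional space W, and consider the saddle-point system S U + p Λ = F, together with complementarity Λ = min{0, Λ + α p^T (U − X)} for α > 0. If (U, Λ) solves this system, then U minimizes J(V') := ½⟨S V', V'⟩ − ⟨F, V'⟩ over the convex set { V' : p^T V' ≥ p^T X componentwise } (with respect to the coordinates associated with W), and conversely. -/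
open scoped RealInnerProductSpace

lemma farkas_aux {V : Type*} [NormedAddCommGroup V] [InnerProductSpace ℝ V] :
    ∀ (k : ℕ) (a : Fin k → V) (g : V),
      (¬ ∃ μ : Fin k → ℝ, (∀ i, 0 ≤ μ i) ∧ g = ∑ i, μ i • a i) →
      ∃ W : V, (∀ i, 0 ≤ ⟪a i, W⟫) ∧ ⟪g, W⟫ < 0 := by
  intro k
  induction k with
  | zero =>
    intro a g hg
    have hg0 : g ≠ 0 := by
      rintro rfl; exact hg ⟨0, fun i => le_refl 0, by simp⟩
    refine ⟨-g, fun i => i.elim0, ?_⟩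
    rw [inner_neg_right, neg_lt, neg_zero, real_inner_self_eq_norm_sq]
    exact pow_pos (norm_pos_iff.mpr hg0) 2
  | succ k ih =>
    intro a g hg
    set a' : Fin k → V := fun i => a i.castSucc with ha'
    set b := a (Fin.last k) with hbdef
    have h1 : ¬ ∃ μ : Fin k → ℝ, (∀ i, 0 ≤ μ i) ∧ g = ∑ i, μ i • a' i := by
      rintro ⟨μ, hμ, hrep⟩
      refine hg ⟨Fin.snoc μ 0, ?_, ?_⟩
      · intro i
        induction i using Fin.lastCases with
        | last => simp
        | cast i => simpa using hμ i
      · rw [Fin.sum_univ_castSucc]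
        simpa using hrep
    obtain ⟨W, hW1, hW2⟩ := ih a' g h1
    by_cases hb : 0 ≤ ⟪b, W⟫
    · refine ⟨W, ?_, hW2⟩
      intro i
      induction i using Fin.lastCases with
      | last => exact hb
      | cast i => exact hW1 i
    · push_neg at hb
      set c := ⟪b, W⟫ with hcdef
      have hc0 : c ≠ 0 := ne_of_lt hb
      set a'' : Fin k → V := fun i => a' i - (⟪a' i, W⟫ / c) • b with ha''
      set g' := g - (⟪g, W⟫ / c) • b with hg'
      have h2 : ¬ ∃ μ : Fin k → ℝ, (∀ i, 0 ≤ μ i) ∧ g' = ∑ i, μ i • a'' i := by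
        rintro ⟨μ, hμ, hrep⟩
        set t : ℝ := ⟪g, W⟫ / c - ∑ i, μ i * (⟪a' i, W⟫ / c) with ht
        have ht0 : 0 ≤ t := by
          have h3 : 0 < ⟪g, W⟫ / c := div_pos_of_neg_of_neg hW2 hb
          have h4 : ∑ i, μ i * (⟪a' i, W⟫ / c) ≤ 0 := by
            apply Finset.sum_nonpos
            intro i _
            exact mul_nonpos_of_nonneg_of_nonpos (hμ i)
              (div_nonpos_of_nonneg_of_nonpos (hW1 i) hb.le)
          rw [ht]; linarith
        refine hg ⟨Fin.snoc μ t, ?_, ?_⟩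
        · intro i
          induction i using Fin.lastCases with
          | last => simpa using ht0
          | cast i => simpa using hμ i
        · rw [Fin.sum_univ_castSucc]
          simp only [Fin.snoc_castSucc, Fin.snoc_last]
          have e1 : ∑ i, μ i • a'' i
              = ∑ i, μ i • a' i - (∑ i, μ i * (⟪a' i, W⟫ / c)) • b := by
            rw [Finset.sum_smul, ← Finset.sum_sub_distrib]
            congr 1; ext i
            rw [smul_sub, smul_smul]
          have e2 : g = g' + (⟪g, W⟫ / c) • b := by rw [hg']; abel
          rw [e2, hrep, e1, ht]
          rw [sub_smul]
          abel
      obtain ⟨W', hW1', hW2'⟩ := ih a'' g' h2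
      refine ⟨W' - (⟪b, W'⟫ / c) • W, ?_, ?_⟩
      · intro i
        induction i using Fin.lastCases with
        | last =>
          rw [inner_sub_right, real_inner_smul_right, ← hbdef, ← hcdef,
            div_mul_cancel₀ _ hc0, sub_self]
        | cast i =>
          have h5 := hW1' i
          simp only [ha'', ha', inner_sub_left, inner_sub_right, real_inner_smul_left,
            real_inner_smul_right] at h5 ⊢
          have e : ⟪a i.castSucc, W'⟫ - ⟪b, W'⟫ / c * ⟪a i.castSucc, W⟫
              = ⟪a i.castSucc, W'⟫ - ⟪a i.castSucc, W⟫ / c * ⟪b, W'⟫ := by ring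
          rw [e]; exact h5
      · have h5 := hW2'
        simp only [hg', inner_sub_left, inner_sub_right, real_inner_smul_left,
          real_inner_smul_right] at h5 ⊢
        have e : ⟪g, W'⟫ - ⟪b, W'⟫ / c * ⟪g, W⟫
            = ⟪g, W'⟫ - ⟪g, W⟫ / c * ⟪b, W'⟫ := by ring
        rw [e]; exact h5

lemma farkas {V : Type*} [NormedAddCommGroup V] [InnerProductSpace ℝ V]
    (k : ℕ) (a : Fin k → V) (g : V)
    (h : ∀ W : V, (∀ i, 0 ≤ ⟪a i, W⟫) → 0 ≤ ⟪g, W⟫) :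
    ∃ μ : Fin k → ℝ, (∀ i, 0 ≤ μ i) ∧ g = ∑ i, μ i • a i := by
  by_contra hc
  obtain ⟨W, hW1, hW2⟩ := farkas_aux k a g hc
  exact absurd (h W hW1) (not_le.mpr hW2)

lemma euclid_decomp {V : Type*} [NormedAddCommGroup V] [InnerProductSpace ℝ V]
    (n : ℕ) (p : EuclideanSpace ℝ (Fin n) →ₗ[ℝ] V) (x : EuclideanSpace ℝ (Fin n)) :
    p x = ∑ i, x i • p (EuclideanSpace.single i 1) := by
  have hx : x = ∑ i, x i • EuclideanSpace.single i 1 := by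
    conv_lhs => rw [← (EuclideanSpace.basisFun (Fin n) ℝ).sum_repr' x]
    simp [EuclideanSpace.basisFun_apply, EuclideanSpace.inner_single_left]
  conv_lhs => rw [hx]
  rw [map_sum]
  simp [map_smul]

set_option maxHeartbeats 1000000 in
/-- Equivalence of the KKT/complementarity saddle-point system and the constrained
quadratic minimization: `(U, Λ)` solves `S U + p Λ = F` together with
`Λ = min{0, Λ + α pᵀ(U − X)}` (componentwise) for some `Λ` if and only if `U`
minimizes `J(V') = ½⟪S V', V'⟫ − ⟪F, V'⟫` over `{V' : pᵀ V' ≥ pᵀ X componentwise}`. -/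
theorem stmt18 {V : Type*} [NormedAddCommGroup V] [InnerProductSpace ℝ V]
    [FiniteDimensional ℝ V] (n : ℕ) (S : V →ₗ[ℝ] V)
    (hsym : ∀ x y : V, ⟪S x, y⟫ = ⟪x, S y⟫)
    (hpd : ∀ x : V, x ≠ 0 → 0 < ⟪S x, x⟫)
    (p : EuclideanSpace ℝ (Fin n) →ₗ[ℝ] V) (F X : V) (α : ℝ) (hα : 0 < α) (U : V) :
    (∃ Λ : EuclideanSpace ℝ (Fin n),
        S U + p Λ = F ∧
        ∀ i : Fin n, Λ i = min 0 (Λ i + α *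
          (⟪p (EuclideanSpace.single i 1), U⟫ - ⟪p (EuclideanSpace.single i 1), X⟫))) ↔
      ((∀ i : Fin n,
          ⟪p (EuclideanSpace.single i 1), X⟫ ≤ ⟪p (EuclideanSpace.single i 1), U⟫) ∧
        ∀ V' : V,
          (∀ i : Fin n, ⟪p (EuclideanSpace.single i 1), X⟫ ≤
            ⟪p (EuclideanSpace.single i 1), V'⟫) →
          (1 / 2) * ⟪S U, U⟫ - ⟪F, U⟫ ≤ (1 / 2) * ⟪S V', V'⟫ - ⟪F, V'⟫) := by
  classical
  have hSnn : ∀ w : V, 0 ≤ ⟪S w, w⟫ := by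
    intro w
    rcases eq_or_ne w 0 with rfl | hw
    · simp
    · exact (hpd w hw).le
  have hcross : ∀ u w : V, ⟪S w, u⟫ = ⟪S u, w⟫ := by
    intro u w; rw [hsym w u, real_inner_comm]
  constructor
  · rintro ⟨Λ, heq, hcomp⟩
    have key : ∀ i, Λ i ≤ 0 ∧
        0 ≤ ⟪p (EuclideanSpace.single i 1), U⟫ - ⟪p (EuclideanSpace.single i 1), X⟫ ∧
        Λ i * (⟪p (EuclideanSpace.single i 1), U⟫ - ⟪p (EuclideanSpace.single i 1), X⟫) = 0 := by
      intro i
      set D : ℝ := ⟪p (EuclideanSpace.single i 1), U⟫ - ⟪p (EuclideanSpace.single i 1), X⟫ with hD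
      have h := hcomp i
      rw [← hD] at h
      rcases le_or_gt 0 (Λ i + α * D) with hge | hlt
      · have h0 : Λ i = 0 := by rw [h]; exact min_eq_left (by linarith)
        refine ⟨le_of_eq h0, ?_, by rw [h0]; ring⟩
        rw [h0] at hge
        nlinarith
      · have h1 : Λ i = Λ i + α * D := by nth_rewrite 1 [h]; exact min_eq_right hlt.le
        have h2 : D = 0 := by nlinarith
        refine ⟨?_, le_of_eq h2.symm, by rw [h2]; ring⟩
        rw [h]; exact min_le_left _ _
    refine ⟨fun i => by linarith [(key i).2.1], ?_⟩
    intro V' hfeas'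
    set W : V := V' - U with hW
    have hpΛ : ⟪p Λ, W⟫ ≤ 0 := by
      rw [euclid_decomp n p Λ, sum_inner]
      apply Finset.sum_nonpos
      intro i _
      rw [real_inner_smul_left]
      obtain ⟨h1, h2, h3⟩ := key i
      have h4 : -(⟪p (EuclideanSpace.single i 1), U⟫ - ⟪p (EuclideanSpace.single i 1), X⟫)
          ≤ ⟪p (EuclideanSpace.single i 1), W⟫ := by
        rw [hW, inner_sub_right]
        linarith [hfeas' i]
      nlinarith
    have hgW : 0 ≤ ⟪S U - F, W⟫ := by
      have hg : S U - F = -(p Λ) := by rw [← heq]; abel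
      rw [hg, inner_neg_left]
      linarith
    have hVW : V' = U + W := by rw [hW]; abel
    have hexp : ⟪S V', V'⟫ = ⟪S U, U⟫ + 2 * ⟪S U, W⟫ + ⟪S W, W⟫ := by
      rw [hVW, map_add, inner_add_left, inner_add_right, inner_add_right, hcross U W]
      ring
    have hFexp : ⟪F, V'⟫ = ⟪F, U⟫ + ⟪F, W⟫ := by rw [hVW, inner_add_right]
    have h4 : ⟪S U - F, W⟫ = ⟪S U, W⟫ - ⟪F, W⟫ := by rw [inner_sub_left]
    have h5 : 0 ≤ ⟪S W, W⟫ := hSnn W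
    rw [hexp, hFexp]
    linarith
  · rintro ⟨hfeas, hmin⟩
    set pe : Fin n → V := fun i => p (EuclideanSpace.single i 1) with hpe
    have hpei : ∀ i, pe i = p (EuclideanSpace.single i 1) := fun i => rfl
    set d : Fin n → ℝ := fun i => ⟪pe i, U⟫ - ⟪pe i, X⟫ with hd
    have hdi : ∀ i, d i = ⟪p (EuclideanSpace.single i 1), U⟫
        - ⟪p (EuclideanSpace.single i 1), X⟫ := fun i => rfl
    have hdnn : ∀ i, 0 ≤ d i := fun i => by rw [hdi i]; linarith [hfeas i]
    set a : Fin n → V := fun i => if d i = 0 then pe i else 0 with ha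
    have hai : ∀ i, a i = if d i = 0 then pe i else 0 := fun i => rfl
    set g : V := S U - F with hg
    clear_value g
    have VI : ∀ W : V, (∀ i, 0 ≤ ⟪a i, W⟫) → 0 ≤ ⟪g, W⟫ := by
      intro W hW
      by_contra hneg
      push_neg at hneg
      set r : ℝ := -⟪g, W⟫ with hr
      have hrpos : 0 < r := by rw [hr]; linarith
      set s : ℝ := ⟪S W, W⟫ with hs
      have hsnn : 0 ≤ s := by rw [hs]; exact hSnn W
      clear_value r s
      have hactive : ∀ i, ⟪pe i, W⟫ < 0 → 0 < d i := by
        intro i hi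
        rcases (hdnn i).lt_or_eq with h | h
        · exact h
        · exfalso
          have h2 := hW i
          rw [hai i, if_pos h.symm] at h2
          linarith
      obtain ⟨t0, ht0pos, ht0le⟩ : ∃ t0 : ℝ, 0 < t0 ∧
          ∀ i, ⟪pe i, W⟫ < 0 → t0 ≤ d i / (-⟪pe i, W⟫) := by
        classical
        set f : Fin n → ℝ := fun i => if ⟪pe i, W⟫ < 0 then d i / (-⟪pe i, W⟫) else 1 with hf
        have hfi : ∀ i, f i = if ⟪pe i, W⟫ < 0 then d i / (-⟪pe i, W⟫) else 1 := fun i => rfl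
        set T : Finset ℝ := insert 1 (Finset.univ.image f) with hT
        have hTne : T.Nonempty := ⟨1, Finset.mem_insert_self 1 _⟩
        refine ⟨T.min' hTne, ?_, ?_⟩
        · have hfpos : ∀ i, 0 < f i := by
            intro i
            rw [hfi i]
            by_cases hi : ⟪pe i, W⟫ < 0
            · rw [if_pos hi]
              exact div_pos (hactive i hi) (by linarith)
            · rw [if_neg hi]; norm_num
          have hmem : T.min' hTne ∈ T := T.min'_mem hTne
          rcases Finset.mem_insert.mp hmem with h | h
          · rw [h]; norm_num
          · obtain ⟨i, _, hi⟩ := Finset.mem_image.mp h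
            rw [← hi]; exact hfpos i
        · intro i hi
          have h1 : T.min' hTne ≤ f i := by
            apply Finset.min'_le
            exact Finset.mem_insert.mpr (Or.inr (Finset.mem_image_of_mem f (Finset.mem_univ i)))
          rw [hfi i, if_pos hi] at h1
          exact h1
      obtain ⟨t, htpos, htle0, htler⟩ : ∃ t : ℝ, 0 < t ∧ t ≤ t0 ∧ t * (1 + s) ≤ r := by
        refine ⟨min t0 (r / (1 + s)), lt_min ht0pos (div_pos hrpos (by linarith)),
          min_le_left _ _, (le_div_iff₀ (by linarith)).mp (min_le_right _ _)⟩
      have hfeas2 : ∀ i, ⟪p (EuclideanSpace.single i 1), X⟫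
          ≤ ⟪p (EuclideanSpace.single i 1), U + t • W⟫ := by
        intro i
        rw [inner_add_right, real_inner_smul_right, ← hpei i]
        have h3 := hdi i
        rw [← hpei i] at h3
        by_cases hi : ⟪pe i, W⟫ < 0
        · have h1 : t ≤ d i / (-⟪pe i, W⟫) := le_trans htle0 (ht0le i hi)
          have h2 : t * (-⟪pe i, W⟫) ≤ d i := (le_div_iff₀ (by linarith)).mp h1
          linarith
        · push_neg at hi
          have h4 : 0 ≤ t * ⟪pe i, W⟫ := mul_nonneg htpos.le hi
          linarith [hfeas i]
      have hM := hmin (U + t • W) hfeas2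
      have hexp : ⟪S (U + t • W), U + t • W⟫
          = ⟪S U, U⟫ + 2 * t * ⟪S U, W⟫ + t ^ 2 * s := by
        rw [map_add, map_smul, inner_add_left, inner_add_right, inner_add_right,
          real_inner_smul_left, real_inner_smul_right, real_inner_smul_right,
          real_inner_smul_left, hcross U W, hs]
        ring
      have hFexp : ⟪F, U + t • W⟫ = ⟪F, U⟫ + t * ⟪F, W⟫ := by
        rw [inner_add_right, real_inner_smul_right]
      rw [hexp, hFexp] at hM
      have hgWeq : ⟪g, W⟫ = ⟪S U, W⟫ - ⟪F, W⟫ := by rw [hg, inner_sub_left]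
      have hrW : ⟪S U, W⟫ - ⟪F, W⟫ = -r := by rw [hr, hgWeq]; ring
      have h6 : 0 ≤ -(t * r) + t ^ 2 / 2 * s := by nlinarith [hM]
      have h7 : t * r ≤ t * (t * s / 2) := by nlinarith [h6]
      have h8 : r ≤ t * s / 2 := (mul_le_mul_iff_right₀ htpos).mp h7
      have h11 : t + t * s ≤ r := by nlinarith [htler]
      have h12 : 0 ≤ t * s := mul_nonneg htpos.le hsnn
      linarith
    obtain ⟨μ, hμ, hrep⟩ := farkas n a g VI
    refine ⟨(WithLp.toLp 2 (fun i => if d i = 0 then -μ i else 0) : EuclideanSpace ℝ (Fin n)), ?_, ?_⟩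
    · have hpΛ : p (WithLp.toLp 2 (fun i => if d i = 0 then -μ i else 0) : EuclideanSpace ℝ (Fin n))
          = -(∑ i, μ i • a i) := by
        rw [euclid_decomp n p _, ← Finset.sum_neg_distrib]
        apply Finset.sum_congr rfl
        intro i _
        show (if d i = 0 then -μ i else 0) • p (EuclideanSpace.single i 1) = -(μ i • a i)
        rw [hai i]
        by_cases hi : d i = 0
        · rw [if_pos hi, if_pos hi, neg_smul, hpei i]
        · rw [if_neg hi, if_neg hi, zero_smul, smul_zero, neg_zero]
      rw [hpΛ, ← hrep, hg]
      abel
    · intro i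
      show (if d i = 0 then -μ i else 0) = min 0 ((if d i = 0 then -μ i else 0)
        + α * (⟪p (EuclideanSpace.single i 1), U⟫ - ⟪p (EuclideanSpace.single i 1), X⟫))
      rw [← hdi i]
      by_cases hi : d i = 0
      · rw [if_pos hi, hi, mul_zero, add_zero]
        exact (min_eq_right (neg_nonpos.mpr (hμ i))).symm
      · have hdpos : 0 < d i := (hdnn i).lt_or_eq.resolve_right (fun h => hi h.symm)
        rw [if_neg hi, zero_add]
        exact (min_eq_left (mul_nonneg hα.le hdpos.le)).symm
end
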